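/- arXiv:2012.00499 — 2 statements merged into one kernel-verified Lean document; each statement's English description precedes it below -/
import Mathlib

section
/- Faithfully drifting features are weakly drifting: if a feature i ∈ Fin d is drifting but belongs to no minimal drift inducing set, then i is not strongly drifting, i.e. T and X_i are conditionally independent given X_{R_i}, where R_i := Fin d \ {i}. -/
open MeasureTheory ProbabilityTheory

/-- The restriction of the feature vector `X` to the set of features `S`. -/
def featVec {Ω : Type*} {d : ℕ} (X : Ω → Fin d → ℝ) (S : Set (Fin d)) : Ω → (S → ℝ) :=
  fun ω => S.restrict (X ω)

lemma measurable_featVec {Ω : Type*} [MeasurableSpace Ω] {d : ℕ} {X : Ω → Fin d → ℝ}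
    (hX : Measurable X) (S : Set (Fin d)) : Measurable (featVec X S) :=
  measurable_pi_lambda _ fun i => (measurable_pi_apply (i : Fin d)).comp hX

/-- A set of features `S` is drift inducing iff `T` and `X_{Sᶜ}` are conditionally
independent given `X_S`. -/
def DriftInducing {Ω : Type*} [MeasurableSpace Ω] [StandardBorelSpace Ω] {d : ℕ}
    (μ : Measure Ω) [IsFiniteMeasure μ] (X : Ω → Fin d → ℝ) (hX : Measurable X)
    (T : Ω → ℝ) (S : Set (Fin d)) : Prop :=
  CondIndepFun (MeasurableSpace.comap (featVec X S) inferInstance)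
    ((measurable_featVec hX S).comap_le) T (featVec X Sᶜ) μ

/-- A set of features is minimal drift inducing iff it is drift inducing and no proper
subset of it is drift inducing. -/
def MinimalDriftInducing {Ω : Type*} [MeasurableSpace Ω] [StandardBorelSpace Ω] {d : ℕ}
    (μ : Measure Ω) [IsFiniteMeasure μ] (X : Ω → Fin d → ℝ) (hX : Measurable X)
    (T : Ω → ℝ) (S : Set (Fin d)) : Prop :=
  DriftInducing μ X hX T S ∧ ∀ S' ⊂ S, ¬ DriftInducing μ X hX T S'

/-- A feature `i` is drifting iff there is `R ⊆ Fin d \ {i}` such that `T` and `X_i`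
are not conditionally independent given `X_R`. -/
def DriftingFeature {Ω : Type*} [MeasurableSpace Ω] [StandardBorelSpace Ω] {d : ℕ}
    (μ : Measure Ω) [IsFiniteMeasure μ] (X : Ω → Fin d → ℝ) (hX : Measurable X)
    (T : Ω → ℝ) (i : Fin d) : Prop :=
  ∃ R ⊆ ({i}ᶜ : Set (Fin d)),
    ¬ CondIndepFun (MeasurableSpace.comap (featVec X R) inferInstance)
      ((measurable_featVec hX R).comap_le) T (fun ω => X ω i) μ

/-- A feature `i` is strongly drifting iff `T` and `X_i` are not conditionally
independent given `X_{R_i}` where `R_i = Fin d \ {i}`. -/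
def StronglyDrifting {Ω : Type*} [MeasurableSpace Ω] [StandardBorelSpace Ω] {d : ℕ}
    (μ : Measure Ω) [IsFiniteMeasure μ] (X : Ω → Fin d → ℝ) (hX : Measurable X)
    (T : Ω → ℝ) (i : Fin d) : Prop :=
  ¬ CondIndepFun (MeasurableSpace.comap (featVec X ({i}ᶜ : Set (Fin d))) inferInstance)
    ((measurable_featVec hX _).comap_le) T (fun ω => X ω i) μ

/-- A feature is a drift inducing feature iff it belongs to some minimal drift
inducing set. -/
def DriftInducingFeature {Ω : Type*} [MeasurableSpace Ω] [StandardBorelSpace Ω] {d : ℕ}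
    (μ : Measure Ω) [IsFiniteMeasure μ] (X : Ω → Fin d → ℝ) (hX : Measurable X)
    (T : Ω → ℝ) (i : Fin d) : Prop :=
  ∃ S, MinimalDriftInducing μ X hX T S ∧ i ∈ S

lemma comap_featVec_eq {Ω : Type*} [MeasurableSpace Ω] {d : ℕ} (X : Ω → Fin d → ℝ)
    (R : Set (Fin d)) :
    MeasurableSpace.comap (featVec X R) inferInstance
      = ⨆ j : R, MeasurableSpace.comap (fun ω => X ω (j : Fin d)) inferInstance := by
  show MeasurableSpace.comap (featVec X R) MeasurableSpace.pi = _
  rw [MeasurableSpace.pi, MeasurableSpace.comap_iSup]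
  simp only [MeasurableSpace.comap_comp]
  rfl

lemma comap_featVec_mono {Ω : Type*} [MeasurableSpace Ω] {d : ℕ} (X : Ω → Fin d → ℝ)
    {R R' : Set (Fin d)} (h : R ⊆ R') :
    MeasurableSpace.comap (featVec X R) inferInstance
      ≤ MeasurableSpace.comap (featVec X R') inferInstance := by
  rw [comap_featVec_eq, comap_featVec_eq]
  exact iSup_le fun j => le_iSup
    (fun j' : R' => MeasurableSpace.comap (fun ω => X ω (j' : Fin d)) inferInstance) ⟨j.1, h j.2⟩

lemma comap_X_eq {Ω : Type*} [MeasurableSpace Ω] {d : ℕ} (X : Ω → Fin d → ℝ) :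
    MeasurableSpace.comap X inferInstance
      = ⨆ j : Fin d, MeasurableSpace.comap (fun ω => X ω j) inferInstance := by
  show MeasurableSpace.comap X MeasurableSpace.pi = _
  rw [MeasurableSpace.pi, MeasurableSpace.comap_iSup]
  simp only [MeasurableSpace.comap_comp]
  rfl

lemma comap_sup_compl {Ω : Type*} [MeasurableSpace Ω] {d : ℕ} (X : Ω → Fin d → ℝ)
    (R : Set (Fin d)) :
    MeasurableSpace.comap (featVec X R) inferInstance
        ⊔ MeasurableSpace.comap (featVec X Rᶜ) inferInstance
      = MeasurableSpace.comap X inferInstance := by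
  rw [comap_featVec_eq, comap_featVec_eq, comap_X_eq]
  apply le_antisymm
  · exact sup_le (iSup_le fun j => le_iSup (fun j' : Fin d =>
      MeasurableSpace.comap (fun ω => X ω j') inferInstance) j.1)
      (iSup_le fun j => le_iSup (fun j' : Fin d =>
      MeasurableSpace.comap (fun ω => X ω j') inferInstance) j.1)
  · refine iSup_le fun j => ?_
    by_cases hj : j ∈ R
    · exact le_trans (le_iSup (fun j' : R =>
        MeasurableSpace.comap (fun ω => X ω (j' : Fin d)) inferInstance) ⟨j, hj⟩) le_sup_left
    · exact le_trans (le_iSup (fun j' : ↥Rᶜ =>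
        MeasurableSpace.comap (fun ω => X ω (j' : Fin d)) inferInstance) ⟨j, hj⟩) le_sup_right

lemma comap_sup_singleton {Ω : Type*} [MeasurableSpace Ω] {d : ℕ} (X : Ω → Fin d → ℝ)
    (i : Fin d) :
    MeasurableSpace.comap (featVec X ({i}ᶜ : Set (Fin d))) inferInstance
        ⊔ MeasurableSpace.comap (fun ω => X ω i) inferInstance
      = MeasurableSpace.comap X inferInstance := by
  rw [comap_featVec_eq, comap_X_eq]
  apply le_antisymm
  · refine sup_le (iSup_le fun j => le_iSup (fun j' : Fin d =>
      MeasurableSpace.comap (fun ω => X ω j') inferInstance) j.1)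
      (le_iSup (fun j' : Fin d => MeasurableSpace.comap (fun ω => X ω j') inferInstance) i)
  · refine iSup_le fun j => ?_
    by_cases hj : j = i
    · subst hj; exact le_sup_right
    · exact le_trans (le_iSup (fun j' : ↥({i}ᶜ : Set (Fin d)) =>
        MeasurableSpace.comap (fun ω => X ω (j' : Fin d)) inferInstance) ⟨j, hj⟩) le_sup_left


lemma indicator_one_mul' {Ω : Type*} (B : Set Ω) (c : Ω → ℝ) :
    (B.indicator (fun _ => (1:ℝ))) * c = B.indicator c := by
  funext x
  by_cases hx : x ∈ B <;> simp [hx]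

lemma condIndepFun_of_condexp {Ω β γ : Type*} {m' : MeasurableSpace Ω}
    [mΩ : MeasurableSpace Ω] [StandardBorelSpace Ω] {mβ : MeasurableSpace β}
    {mγ : MeasurableSpace γ} (hm' : m' ≤ mΩ) {μ : Measure Ω} [IsFiniteMeasure μ]
    {f : Ω → β} {g : Ω → γ} (hf : Measurable f) (hg : Measurable g)
    (h : ∀ s : Set β, MeasurableSet s →
      μ[(f ⁻¹' s).indicator (fun _ => (1:ℝ)) | m' ⊔ MeasurableSpace.comap g mγ]
        =ᵐ[μ] μ[(f ⁻¹' s).indicator (fun _ => (1:ℝ)) | m']) :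
    CondIndepFun m' hm' f g μ := by
  rw [condIndepFun_iff_condExp_inter_preimage_eq_mul hf hg]
  intro s t hs ht
  have hm : m' ⊔ MeasurableSpace.comap g mγ ≤ mΩ := sup_le hm' hg.comap_le
  have hm'm : m' ≤ m' ⊔ MeasurableSpace.comap g mγ := le_sup_left
  set A := f ⁻¹' s with hA_def
  set B := g ⁻¹' t with hB_def
  have hA : MeasurableSet[mΩ] A := hf hs
  have hB : MeasurableSet[mΩ] B := hg ht
  have hBm : MeasurableSet[m' ⊔ MeasurableSpace.comap g mγ] B :=
    (le_sup_right : MeasurableSpace.comap g mγ ≤ _) _ ⟨t, ht, rfl⟩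
  set c := μ[A.indicator (fun _ => (1:ℝ)) | m'] with hc_def
  have hcSM : StronglyMeasurable[m'] c := stronglyMeasurable_condExp
  have h1B_SM : StronglyMeasurable[m' ⊔ MeasurableSpace.comap g mγ]
      (B.indicator (fun _ => (1:ℝ))) := stronglyMeasurable_const.indicator hBm
  have hint_ind : ∀ (C : Set Ω), MeasurableSet[mΩ] C →
      Integrable (C.indicator (fun _ => (1:ℝ))) μ :=
    fun C hC => (integrable_const 1).indicator hC
  have hprod : (A ∩ B).indicator (fun _ => (1:ℝ))
      = (B.indicator (fun _ => (1:ℝ))) * (A.indicator (fun _ => (1:ℝ))) := by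
    rw [indicator_one_mul', Set.indicator_indicator, Set.inter_comm]
  show μ[(A ∩ B).indicator (fun _ => (1:ℝ)) | m']
      =ᵐ[μ] fun ω => c ω * (μ[B.indicator (fun _ => (1:ℝ)) | m']) ω
  calc μ[(A ∩ B).indicator (fun _ => (1:ℝ)) | m']
      =ᵐ[μ] μ[μ[(A ∩ B).indicator (fun _ => (1:ℝ)) | m' ⊔ MeasurableSpace.comap g mγ] | m'] :=
        (condExp_condExp_of_le hm'm hm).symm
    _ =ᵐ[μ] μ[(B.indicator (fun _ => (1:ℝ))) * c | m'] := by
        refine condExp_congr_ae ?_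
        calc μ[(A ∩ B).indicator (fun _ => (1:ℝ)) | m' ⊔ MeasurableSpace.comap g mγ]
            = μ[(B.indicator (fun _ => (1:ℝ))) * (A.indicator (fun _ => (1:ℝ))) |
                m' ⊔ MeasurableSpace.comap g mγ] := by rw [hprod]
          _ =ᵐ[μ] (B.indicator (fun _ => (1:ℝ)))
              * μ[A.indicator (fun _ => (1:ℝ)) | m' ⊔ MeasurableSpace.comap g mγ] := by
              refine condExp_mul_of_stronglyMeasurable_left h1B_SM ?_ (hint_ind A hA)
              rw [← hprod]; exact hint_ind _ (hA.inter hB)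
          _ =ᵐ[μ] (B.indicator (fun _ => (1:ℝ))) * c := by
              filter_upwards [h s hs] with x hx
              simp only [Pi.mul_apply]
              rw [hx]
    _ =ᵐ[μ] c * μ[B.indicator (fun _ => (1:ℝ)) | m'] := by
        rw [mul_comm]
        refine condExp_mul_of_stronglyMeasurable_left hcSM ?_ (hint_ind B hB)
        rw [mul_comm, indicator_one_mul']
        exact integrable_condExp.indicator hB
    _ = fun ω => c ω * (μ[B.indicator (fun _ => (1:ℝ)) | m']) ω := rfl


lemma condexp_eq_of_condIndepFun {Ω β γ : Type*} {m' : MeasurableSpace Ω}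
    [mΩ : MeasurableSpace Ω] [StandardBorelSpace Ω] {mβ : MeasurableSpace β}
    {mγ : MeasurableSpace γ} (hm' : m' ≤ mΩ) {μ : Measure Ω} [IsFiniteMeasure μ]
    {f : Ω → β} {g : Ω → γ} (hf : Measurable f) (hg : Measurable g)
    (h : CondIndepFun m' hm' f g μ) {s : Set β} (hs : MeasurableSet s) :
    μ[(f ⁻¹' s).indicator (fun _ => (1:ℝ)) | m' ⊔ MeasurableSpace.comap g mγ]
      =ᵐ[μ] μ[(f ⁻¹' s).indicator (fun _ => (1:ℝ)) | m'] := by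
  have hmul := (condIndepFun_iff_condExp_inter_preimage_eq_mul hf hg).mp h
  have hm : m' ⊔ MeasurableSpace.comap g mγ ≤ mΩ := sup_le hm' hg.comap_le
  set A := f ⁻¹' s with hA_def
  have hA : MeasurableSet[mΩ] A := hf hs
  set c := μ[A.indicator (fun _ => (1:ℝ)) | m'] with hc_def
  have hci : Integrable c μ := integrable_condExp
  have hint_ind : ∀ (C : Set Ω), MeasurableSet[mΩ] C →
      Integrable (C.indicator (fun _ => (1:ℝ))) μ :=
    fun C hC => (integrable_const 1).indicator hC
  -- the generating π-system for the sup σ-algebra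
  set π : Set (Set Ω) :=
    {E | ∃ t₁ t₂, MeasurableSet[m'] t₁ ∧ MeasurableSet t₂ ∧ E = t₁ ∩ g ⁻¹' t₂} with hπ_def
  have h_eq : (m' ⊔ MeasurableSpace.comap g mγ) = MeasurableSpace.generateFrom π := by
    apply le_antisymm
    · refine sup_le ?_ ?_
      · intro t htm
        have : t = t ∩ g ⁻¹' Set.univ := by simp
        rw [this]
        exact MeasurableSpace.measurableSet_generateFrom
          ⟨t, Set.univ, htm, MeasurableSet.univ, rfl⟩
      · rintro u ⟨t₂, ht₂, rfl⟩
        have : g ⁻¹' t₂ = Set.univ ∩ g ⁻¹' t₂ := by simp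
        rw [this]
        exact MeasurableSpace.measurableSet_generateFrom
          ⟨Set.univ, t₂, MeasurableSet.univ, ht₂, rfl⟩
    · refine MeasurableSpace.generateFrom_le ?_
      rintro E ⟨t₁, t₂, h1, h2, rfl⟩
      exact ((le_sup_left : m' ≤ _) _ h1).inter
        ((le_sup_right : MeasurableSpace.comap g mγ ≤ _) _ ⟨t₂, h2, rfl⟩)
  have h_inter : IsPiSystem π := by
    rintro E ⟨t₁, t₂, h1, h2, rfl⟩ F ⟨u₁, u₂, hu1, hu2, rfl⟩ -
    exact ⟨t₁ ∩ u₁, t₂ ∩ u₂, h1.inter hu1, h2.inter hu2, by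
      rw [Set.preimage_inter, Set.inter_inter_inter_comm]⟩
  -- the key integral identity on all sets of the sup σ-algebra
  have key : ∀ E : Set Ω, MeasurableSet[m' ⊔ MeasurableSpace.comap g mγ] E →
      ∫ x in E, c x ∂μ = ∫ x in E, A.indicator (fun _ => (1:ℝ)) x ∂μ := by
    intro E hE
    refine MeasurableSpace.induction_on_inter
      (m := m' ⊔ MeasurableSpace.comap g mγ)
      (C := fun E _ => ∫ x in E, c x ∂μ = ∫ x in E, A.indicator (fun _ => (1:ℝ)) x ∂μ)
      h_eq h_inter (by simp) ?_ ?_ ?_ E hE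
    · -- basic sets t₁ ∩ g ⁻¹' t₂
      rintro E ⟨t₁, t₂, h1, h2, rfl⟩
      have hB : MeasurableSet[mΩ] (g ⁻¹' t₂) := hg h2
      have e1 : (g ⁻¹' t₂).indicator c = c * (g ⁻¹' t₂).indicator (fun _ => (1:ℝ)) := by
        rw [mul_comm, indicator_one_mul']
      have e2 : μ[(g ⁻¹' t₂).indicator c | m']
          =ᵐ[μ] c * μ[(g ⁻¹' t₂).indicator (fun _ => (1:ℝ)) | m'] := by
        rw [e1]
        exact condExp_mul_of_stronglyMeasurable_left stronglyMeasurable_condExp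
          (by rw [← e1]; exact hci.indicator hB) (hint_ind _ hB)
      have e3 : μ[(A ∩ g ⁻¹' t₂).indicator (fun _ => (1:ℝ)) | m']
          =ᵐ[μ] c * μ[(g ⁻¹' t₂).indicator (fun _ => (1:ℝ)) | m'] := hmul s t₂ hs h2
      calc ∫ x in t₁ ∩ g ⁻¹' t₂, c x ∂μ
          = ∫ x in t₁, (g ⁻¹' t₂).indicator c x ∂μ := (setIntegral_indicator hB).symm
        _ = ∫ x in t₁, (μ[(g ⁻¹' t₂).indicator c | m']) x ∂μ :=
            (setIntegral_condExp hm' (hci.indicator hB) h1).symm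
        _ = ∫ x in t₁, (μ[(A ∩ g ⁻¹' t₂).indicator (fun _ => (1:ℝ)) | m']) x ∂μ :=
            integral_congr_ae (ae_restrict_of_ae (e2.trans e3.symm))
        _ = ∫ x in t₁, (A ∩ g ⁻¹' t₂).indicator (fun _ => (1:ℝ)) x ∂μ :=
            setIntegral_condExp hm' (hint_ind _ (hA.inter hB)) h1
        _ = ∫ x in t₁, (g ⁻¹' t₂).indicator (A.indicator (fun _ => (1:ℝ))) x ∂μ := by
            rw [Set.indicator_indicator, Set.inter_comm]
        _ = ∫ x in t₁ ∩ g ⁻¹' t₂, A.indicator (fun _ => (1:ℝ)) x ∂μ :=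
            setIntegral_indicator hB
    · -- complements
      intro E hE hC
      have hEΩ : MeasurableSet[mΩ] E := hm _ hE
      have h1 := integral_add_compl hEΩ hci
      have h2 := integral_add_compl hEΩ (hint_ind A hA)
      have htot : ∫ x, c x ∂μ = ∫ x, A.indicator (fun _ => (1:ℝ)) x ∂μ :=
        integral_condExp hm'
      linarith
    · -- disjoint unions
      intro F hdisj hmeas hC
      have hFΩ : ∀ n, MeasurableSet[mΩ] (F n) := fun n => hm _ (hmeas n)
      rw [integral_iUnion hFΩ hdisj hci.integrableOn,
        integral_iUnion hFΩ hdisj ((hint_ind A hA).integrableOn)]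
      exact tsum_congr hC
  exact (ae_eq_condExp_of_forall_setIntegral_eq hm (hint_ind A hA)
    (fun E _ _ => hci.integrableOn) (fun E hE _ => key E hE)
    (((stronglyMeasurable_condExp (f := A.indicator (fun _ => (1:ℝ))) (μ := μ)).mono
      (le_sup_left : m' ≤ m' ⊔ MeasurableSpace.comap g mγ)).aestronglyMeasurable (μ := μ))).symm



/-- Faithfully drifting features are weakly drifting: a drifting feature contained in
no minimal drift inducing set is not strongly drifting. -/
theorem faithfully_drifting_weakly_drifting {Ω : Type*} [MeasurableSpace Ω]
    [StandardBorelSpace Ω] {d : ℕ} (μ : Measure Ω) [IsProbabilityMeasure μ]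
    (X : Ω → Fin d → ℝ) (hX : Measurable X) (T : Ω → ℝ) (hT : Measurable T) (i : Fin d)
    (hdrift : DriftingFeature μ X hX T i) (hnotind : ¬ DriftInducingFeature μ X hX T i) :
    ¬ StronglyDrifting μ X hX T i := by
  classical
  -- univ is drift inducing
  have huniv : DriftInducing μ X hX T Set.univ := by
    refine condIndepFun_of_condexp _ hT (measurable_featVec hX _) ?_
    haveI : IsEmpty ↥((Set.univ : Set (Fin d))ᶜ) := ⟨fun x => x.2 (Set.mem_univ x.1)⟩
    have hle : MeasurableSpace.comap (featVec X ((Set.univ : Set (Fin d))ᶜ)) inferInstance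
        ≤ MeasurableSpace.comap (featVec X (Set.univ : Set (Fin d))) inferInstance := by
      rintro u ⟨t, ht, rfl⟩
      rcases t.eq_empty_or_nonempty with rfl | ⟨y, hy⟩
      · simp
      · have : t = Set.univ := Set.eq_univ_of_forall (fun x => by rwa [Subsingleton.elim x y])
        subst this
        simp
    rw [sup_eq_left.mpr hle]
    exact fun s hs => Filter.EventuallyEq.rfl
  -- there exists a minimal drift inducing set
  obtain ⟨S, hSdi, hSm⟩ :=
    (Finite.to_wellFoundedLT (α := Set (Fin d))).wf.has_min
      {S | DriftInducing μ X hX T S} ⟨Set.univ, huniv⟩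
  have hSmin : MinimalDriftInducing μ X hX T S :=
    ⟨hSdi, fun S' hss hdi => hSm S' hdi hss⟩
  have hiS : i ∉ S := fun hmem => hnotind ⟨S, hSmin, hmem⟩
  have hXi : Measurable fun ω => X ω i := (measurable_pi_apply i).comp hX
  have hSsub : S ⊆ ({i}ᶜ : Set (Fin d)) := by
    intro j hj
    simp only [Set.mem_compl_iff, Set.mem_singleton_iff]
    rintro rfl
    exact hiS hj
  have hle1 : MeasurableSpace.comap (featVec X S) inferInstance
      ≤ MeasurableSpace.comap (featVec X ({i}ᶜ : Set (Fin d))) inferInstance :=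
    comap_featVec_mono X hSsub
  have hsup1 := comap_sup_compl X S
  have hsup2 := comap_sup_singleton X i
  have hRiM : MeasurableSpace.comap (featVec X ({i}ᶜ : Set (Fin d))) inferInstance
      ≤ MeasurableSpace.comap X inferInstance := hsup2 ▸ le_sup_left
  -- from drift inducedness of S, conditioning on everything equals conditioning on S
  have key1 : ∀ s : Set ℝ, MeasurableSet s →
      μ[(T ⁻¹' s).indicator (fun _ => (1:ℝ)) | MeasurableSpace.comap X inferInstance]
        =ᵐ[μ] μ[(T ⁻¹' s).indicator (fun _ => (1:ℝ)) |
            MeasurableSpace.comap (featVec X S) inferInstance] := by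
    intro s hs
    have := condexp_eq_of_condIndepFun ((measurable_featVec hX S).comap_le) hT
      (measurable_featVec hX Sᶜ) hSdi hs
    rwa [hsup1] at this
  -- hence conditioning on everything equals conditioning on {i}ᶜ
  have key2 : ∀ s : Set ℝ, MeasurableSet s →
      μ[(T ⁻¹' s).indicator (fun _ => (1:ℝ)) | MeasurableSpace.comap X inferInstance]
        =ᵐ[μ] μ[(T ⁻¹' s).indicator (fun _ => (1:ℝ)) |
            MeasurableSpace.comap (featVec X ({i}ᶜ : Set (Fin d))) inferInstance] := by
    intro s hs
    have h1 : μ[(T ⁻¹' s).indicator (fun _ => (1:ℝ)) |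
          MeasurableSpace.comap (featVec X ({i}ᶜ : Set (Fin d))) inferInstance]
        =ᵐ[μ] μ[(T ⁻¹' s).indicator (fun _ => (1:ℝ)) |
          MeasurableSpace.comap (featVec X S) inferInstance] := by
      calc μ[(T ⁻¹' s).indicator (fun _ => (1:ℝ)) |
            MeasurableSpace.comap (featVec X ({i}ᶜ : Set (Fin d))) inferInstance]
          =ᵐ[μ] μ[μ[(T ⁻¹' s).indicator (fun _ => (1:ℝ)) |
              MeasurableSpace.comap X inferInstance] |
              MeasurableSpace.comap (featVec X ({i}ᶜ : Set (Fin d))) inferInstance] :=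
            (condExp_condExp_of_le hRiM hX.comap_le).symm
        _ =ᵐ[μ] μ[μ[(T ⁻¹' s).indicator (fun _ => (1:ℝ)) |
              MeasurableSpace.comap (featVec X S) inferInstance] |
              MeasurableSpace.comap (featVec X ({i}ᶜ : Set (Fin d))) inferInstance] :=
            condExp_congr_ae (key1 s hs)
        _ = μ[(T ⁻¹' s).indicator (fun _ => (1:ℝ)) |
              MeasurableSpace.comap (featVec X S) inferInstance] :=
            condExp_of_stronglyMeasurable (measurable_featVec hX _).comap_le
              (stronglyMeasurable_condExp.mono hle1) integrable_condExp
    exact (key1 s hs).trans h1.symm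
  -- conclude via the condexp characterization
  intro hSD
  apply hSD
  refine condIndepFun_of_condexp ((measurable_featVec hX _).comap_le) hT hXi ?_
  intro s hs
  rw [hsup2]
  exact key2 s hs
end

section
/- Contraction for conditional independence of feature vectors (the key step in the proof that drift inducing features are drifting): let i ∈ S ⊆ Fin d and set R := S \ {i}. If T and X_{S^C} are conditionally independent given X_S (i.e. given the pair (X_R, X_i)), and T and X_i are conditionally independent given X_R, then T and X_{R^C} are conditionally independent given X_R, i.e. R is drift inducing. -/
open MeasureTheory ProbabilityTheory

section CondexpAux

lemma indicator_one_mul_fun {Ω : Type*} (C : Set Ω) (g : Ω → ℝ) :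
    g * C.indicator (fun _ => (1 : ℝ)) = C.indicator g := by
  ext ω; by_cases h : ω ∈ C <;> simp [h]

/-- If `μ⟦A ∩ C | m⟧ = μ⟦A | m⟧ * μ⟦C | m⟧` for all `C ∈ mH`, then conditioning on
`m ⊔ mH` does not change the conditional probability of `A`. -/
lemma condexp_sup_eq_of_prod {Ω : Type*} {m mH : MeasurableSpace Ω} [mΩ : MeasurableSpace Ω]
    {μ : Measure Ω} [IsProbabilityMeasure μ] (hm : m ≤ mΩ) (hH : mH ≤ mΩ)
    {A : Set Ω} (hA : MeasurableSet[mΩ] A)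
    (h : ∀ C, MeasurableSet[mH] C →
      (μ⟦A ∩ C | m⟧) =ᵐ[μ] (μ⟦A | m⟧) * (μ⟦C | m⟧)) :
    (μ⟦A | m ⊔ mH⟧) =ᵐ[μ] μ⟦A | m⟧ := by
  have hmsup : m ⊔ mH ≤ mΩ := sup_le hm hH
  set f : Ω → ℝ := A.indicator (fun _ => 1) with hf_def
  have hf_int : Integrable f μ := (integrable_const (1 : ℝ)).indicator hA
  set P : Set (Set Ω) :=
    {u | ∃ G C, MeasurableSet[m] G ∧ MeasurableSet[mH] C ∧ u = G ∩ C} with hP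
  have h_eq : (m ⊔ mH) = MeasurableSpace.generateFrom P := by
    refine le_antisymm (sup_le ?_ ?_) (MeasurableSpace.generateFrom_le ?_)
    · intro s hs
      exact MeasurableSpace.measurableSet_generateFrom
        ⟨s, Set.univ, hs, MeasurableSet.univ, (Set.inter_univ s).symm⟩
    · intro s hs
      exact MeasurableSpace.measurableSet_generateFrom
        ⟨Set.univ, s, MeasurableSet.univ, hs, (Set.univ_inter s).symm⟩
    · rintro u ⟨G, C, hG, hC, rfl⟩
      exact ((le_sup_left : m ≤ m ⊔ mH) _ hG).inter ((le_sup_right : mH ≤ m ⊔ mH) _ hC)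
  have h_pi : IsPiSystem P := by
    rintro u ⟨G1, C1, hG1, hC1, rfl⟩ v ⟨G2, C2, hG2, hC2, rfl⟩ -
    exact ⟨G1 ∩ G2, C1 ∩ C2, hG1.inter hG2, hC1.inter hC2, Set.inter_inter_inter_comm _ _ _ _⟩
  have key : ∀ u, MeasurableSet[m ⊔ mH] u →
      ∫ x in u, (μ[f|m]) x ∂μ = ∫ x in u, f x ∂μ := by
    intro u hu
    refine MeasurableSpace.induction_on_inter
      (C := fun u _ => ∫ x in u, (μ[f|m]) x ∂μ = ∫ x in u, f x ∂μ) h_eq h_pi ?_ ?_ ?_ ?_ u hu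
    · simp
    · rintro u ⟨G, C, hG, hC, rfl⟩
      have hGm : MeasurableSet[mΩ] G := hm _ hG
      have hCm : MeasurableSet[mΩ] C := hH _ hC
      have hInd : Integrable (C.indicator (fun _ => (1 : ℝ))) μ :=
        (integrable_const (1 : ℝ)).indicator hCm
      have hmul : Integrable ((μ[f|m]) * C.indicator (fun _ => (1 : ℝ))) μ := by
        rw [indicator_one_mul_fun]
        exact integrable_condExp.indicator hCm
      have pull : (μ[(μ[f|m]) * C.indicator (fun _ => (1 : ℝ))|m]) =ᵐ[μ]
          (μ[f|m]) * (μ[C.indicator (fun _ => (1 : ℝ))|m]) :=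
        condExp_mul_of_stronglyMeasurable_left stronglyMeasurable_condExp hmul hInd
      calc ∫ x in G ∩ C, (μ[f|m]) x ∂μ
          = ∫ x in G, C.indicator (μ[f|m]) x ∂μ := (setIntegral_indicator hCm).symm
        _ = ∫ x in G, ((μ[f|m]) * C.indicator (fun _ => (1 : ℝ))) x ∂μ := by
            rw [indicator_one_mul_fun]
        _ = ∫ x in G, (μ[(μ[f|m]) * C.indicator (fun _ => (1 : ℝ))|m]) x ∂μ :=
            (setIntegral_condExp hm hmul hG).symm
        _ = ∫ x in G, (μ[(A ∩ C).indicator (fun _ => (1 : ℝ))|m]) x ∂μ := by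
            refine integral_congr_ae (ae_restrict_of_ae ?_)
            exact (pull.trans (h C hC).symm)
        _ = ∫ x in G, (A ∩ C).indicator (fun _ => (1 : ℝ)) x ∂μ :=
            setIntegral_condExp hm ((integrable_const (1 : ℝ)).indicator (hA.inter hCm)) hG
        _ = ∫ x in G ∩ (A ∩ C), (1 : ℝ) ∂μ := by
            rw [setIntegral_indicator (hA.inter hCm)]
        _ = ∫ x in (G ∩ C) ∩ A, (1 : ℝ) ∂μ := by
            rw [show G ∩ (A ∩ C) = (G ∩ C) ∩ A by rw [Set.inter_comm A C, ← Set.inter_assoc]]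
        _ = ∫ x in G ∩ C, f x ∂μ := by
            rw [hf_def, setIntegral_indicator hA]
    · intro u hu h_int_eq
      have hum : MeasurableSet[mΩ] u := hmsup _ hu
      have h1 : ∫ x in u, (μ[f|m]) x ∂μ + ∫ x in uᶜ, (μ[f|m]) x ∂μ = ∫ x, (μ[f|m]) x ∂μ :=
        integral_add_compl hum integrable_condExp
      have h2 : ∫ x in u, f x ∂μ + ∫ x in uᶜ, f x ∂μ = ∫ x, f x ∂μ :=
        integral_add_compl hum hf_int
      have h3 : ∫ x, (μ[f|m]) x ∂μ = ∫ x, f x ∂μ := integral_condExp hm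
      linarith
    · intro s hdisj hmeas heq
      rw [integral_iUnion (fun n => hmsup _ (hmeas n)) hdisj integrable_condExp.integrableOn,
        integral_iUnion (fun n => hmsup _ (hmeas n)) hdisj hf_int.integrableOn]
      exact tsum_congr heq
  exact (ae_eq_condExp_of_forall_setIntegral_eq hmsup hf_int
    (fun s _ _ => integrable_condExp.integrableOn)
    (fun s hs _ => key s hs)
    (StronglyMeasurable.aestronglyMeasurable (stronglyMeasurable_condExp.mono le_sup_left))).symm

/-- Converse direction: if conditioning on `m ⊔ mH` does not change the conditional
probability of `A`, then the product formula holds for all `C ∈ mH`. -/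
lemma prod_of_condexp_sup_eq {Ω : Type*} {m mH : MeasurableSpace Ω} [mΩ : MeasurableSpace Ω]
    {μ : Measure Ω} [IsProbabilityMeasure μ] (hm : m ≤ mΩ) (hH : mH ≤ mΩ)
    {A : Set Ω} (hA : MeasurableSet[mΩ] A)
    (h : (μ⟦A | m ⊔ mH⟧) =ᵐ[μ] μ⟦A | m⟧) (C : Set Ω) (hC : MeasurableSet[mH] C) :
    (μ⟦A ∩ C | m⟧) =ᵐ[μ] (μ⟦A | m⟧) * (μ⟦C | m⟧) := by
  have hmsup : m ⊔ mH ≤ mΩ := sup_le hm hH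
  have hCm : MeasurableSet[mΩ] C := hH _ hC
  have hInd : ((A ∩ C).indicator (fun _ => (1 : ℝ)))
      = C.indicator (fun _ => (1 : ℝ)) * A.indicator (fun _ => (1 : ℝ)) := by
    ext ω; by_cases h1 : ω ∈ A <;> by_cases h2 : ω ∈ C <;> simp [h1, h2]
  have hA_int : Integrable (A.indicator (fun _ => (1 : ℝ))) μ :=
    (integrable_const (1 : ℝ)).indicator hA
  have hAC_int : Integrable (C.indicator (fun _ => (1 : ℝ)) * A.indicator (fun _ => (1 : ℝ))) μ := by
    rw [← hInd]; exact (integrable_const (1 : ℝ)).indicator (hA.inter hCm)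
  have step1 : (μ[(A ∩ C).indicator (fun _ => (1 : ℝ))|m ⊔ mH]) =ᵐ[μ]
      C.indicator (fun _ => (1 : ℝ)) * (μ⟦A | m ⊔ mH⟧) := by
    rw [hInd]
    exact condExp_mul_of_stronglyMeasurable_left
      (stronglyMeasurable_const.indicator ((le_sup_right : mH ≤ m ⊔ mH) _ hC)) hAC_int hA_int
  have step2 : C.indicator (fun _ => (1 : ℝ)) * (μ⟦A | m ⊔ mH⟧) =ᵐ[μ]
      C.indicator (fun _ => (1 : ℝ)) * (μ⟦A | m⟧) :=
    Filter.EventuallyEq.mul Filter.EventuallyEq.rfl h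
  have hmul2 : Integrable ((μ⟦A | m⟧) * C.indicator (fun _ => (1 : ℝ))) μ := by
    rw [indicator_one_mul_fun]
    exact integrable_condExp.indicator hCm
  calc (μ⟦A ∩ C | m⟧)
      =ᵐ[μ] μ[(μ[(A ∩ C).indicator (fun _ => (1 : ℝ))|m ⊔ mH])|m] :=
        (condExp_condExp_of_le le_sup_left hmsup).symm
    _ =ᵐ[μ] μ[(μ⟦A | m⟧) * C.indicator (fun _ => (1 : ℝ))|m] := by
        refine condExp_congr_ae ?_
        refine (step1.trans step2).trans ?_
        rw [mul_comm]
    _ =ᵐ[μ] (μ⟦A | m⟧) * (μ⟦C | m⟧) :=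
        condExp_mul_of_stronglyMeasurable_left stronglyMeasurable_condExp hmul2
          ((integrable_const (1 : ℝ)).indicator hCm)

/-- Contraction for conditional independence, stated at the level of conditional
expectations of indicators. -/
lemma condexp_contraction_aux {Ω : Type*} {mG mW mY : MeasurableSpace Ω}
    [mΩ : MeasurableSpace Ω] {μ : Measure Ω} [IsProbabilityMeasure μ]
    (hG : mG ≤ mΩ) (hW : mW ≤ mΩ) (hY : mY ≤ mΩ) {A : Set Ω} (hA : MeasurableSet[mΩ] A)
    (h1 : ∀ C, MeasurableSet[mY] C →
      (μ⟦A ∩ C | mG ⊔ mW⟧) =ᵐ[μ] (μ⟦A | mG ⊔ mW⟧) * (μ⟦C | mG ⊔ mW⟧))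
    (h2 : ∀ C, MeasurableSet[mW] C →
      (μ⟦A ∩ C | mG⟧) =ᵐ[μ] (μ⟦A | mG⟧) * (μ⟦C | mG⟧))
    {C : Set Ω} (hC : MeasurableSet[mW ⊔ mY] C) :
    (μ⟦A ∩ C | mG⟧) =ᵐ[μ] (μ⟦A | mG⟧) * (μ⟦C | mG⟧) := by
  have e1 := condexp_sup_eq_of_prod (sup_le hG hW) hY hA h1
  have e2 := condexp_sup_eq_of_prod hG hW hA h2
  have e : (μ⟦A | mG ⊔ (mW ⊔ mY)⟧) =ᵐ[μ] μ⟦A | mG⟧ := by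
    rw [← sup_assoc]; exact e1.trans e2
  exact prod_of_condexp_sup_eq hG (sup_le hW hY) hA e C hC

end CondexpAux

section ComapAux

open MeasurableSpace

variable {Ω : Type*} [MeasurableSpace Ω] {d : ℕ}

lemma comap_featVec_le_of_subset (X : Ω → Fin d → ℝ) {U V : Set (Fin d)} (h : U ⊆ V) :
    MeasurableSpace.comap (featVec X U) inferInstance ≤
      MeasurableSpace.comap (featVec X V) inferInstance := by
  have hcomp : featVec X U = (fun (p : V → ℝ) (j : U) => p ⟨j.1, h j.2⟩) ∘ featVec X V := rfl
  rw [hcomp, ← MeasurableSpace.comap_comp]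
  exact MeasurableSpace.comap_mono
    (measurable_pi_lambda _ fun j => measurable_pi_apply _).comap_le

lemma comap_eval_le (X : Ω → Fin d → ℝ) (U : Set (Fin d)) (j : Fin d) (hj : j ∈ U) :
    MeasurableSpace.comap (fun ω => X ω j) inferInstance ≤
      MeasurableSpace.comap (featVec X U) inferInstance := by
  have hcomp : (fun ω => X ω j) = (fun p : U → ℝ => p ⟨j, hj⟩) ∘ featVec X U := rfl
  rw [hcomp, ← MeasurableSpace.comap_comp]
  exact MeasurableSpace.comap_mono (measurable_pi_apply _).comap_le

lemma comap_featVec_eq_iSup (X : Ω → Fin d → ℝ) (W : Set (Fin d)) :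
    MeasurableSpace.comap (featVec X W) inferInstance =
      ⨆ j : W, MeasurableSpace.comap (fun ω => X ω j) inferInstance := by
  have : (inferInstance : MeasurableSpace (W → ℝ)) =
      ⨆ j : W, (inferInstance : MeasurableSpace ℝ).comap (fun p => p j) := rfl
  rw [this, MeasurableSpace.comap_iSup]
  exact iSup_congr fun j => MeasurableSpace.comap_comp

lemma comap_featVec_union (X : Ω → Fin d → ℝ) (U V : Set (Fin d)) :
    MeasurableSpace.comap (featVec X (U ∪ V)) inferInstance =
      MeasurableSpace.comap (featVec X U) inferInstance ⊔
        MeasurableSpace.comap (featVec X V) inferInstance := by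
  refine le_antisymm ?_ (sup_le (comap_featVec_le_of_subset X Set.subset_union_left)
    (comap_featVec_le_of_subset X Set.subset_union_right))
  rw [comap_featVec_eq_iSup]
  refine iSup_le fun j => ?_
  rcases j.2 with hj | hj
  · exact le_trans (comap_eval_le X U j.1 hj) le_sup_left
  · exact le_trans (comap_eval_le X V j.1 hj) le_sup_right

lemma comap_featVec_singleton (X : Ω → Fin d → ℝ) (i : Fin d) :
    MeasurableSpace.comap (featVec X {i}) inferInstance =
      MeasurableSpace.comap (fun ω => X ω i) inferInstance := by
  refine le_antisymm ?_ (comap_eval_le X {i} i rfl)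
  rw [comap_featVec_eq_iSup]
  refine iSup_le fun j => ?_
  have hji : (fun ω => X ω j.1) = fun ω => X ω i := by
    have h2 := j.2
    simp only [Set.mem_singleton_iff] at h2
    rw [h2]
  rw [hji]

end ComapAux

/-- Contraction for conditional independence of feature vectors: if `S` is drift
inducing and `T` and `X_i` are conditionally independent given `X_{S \ {i}}`, then
`S \ {i}` is drift inducing. -/
theorem contraction_featVec {Ω : Type*} [MeasurableSpace Ω] [StandardBorelSpace Ω] {d : ℕ}
    (μ : Measure Ω) [IsProbabilityMeasure μ] (X : Ω → Fin d → ℝ) (hX : Measurable X)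
    (T : Ω → ℝ) (hT : Measurable T) (S : Set (Fin d)) (i : Fin d) (hi : i ∈ S)
    (h1 : DriftInducing μ X hX T S)
    (h2 : CondIndepFun (MeasurableSpace.comap (featVec X (S \ {i})) inferInstance)
      ((measurable_featVec hX (S \ {i})).comap_le) T (fun ω => X ω i) μ) :
    DriftInducing μ X hX T (S \ {i}) := by
  have hS : (S \ {i}) ∪ {i} = S := Set.diff_union_of_subset (Set.singleton_subset_iff.mpr hi)
  have hRc : (S \ {i})ᶜ = Sᶜ ∪ {i} := by
    rw [Set.diff_eq, Set.compl_inter, compl_compl]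
  have eqS : MeasurableSpace.comap (featVec X S) inferInstance =
      MeasurableSpace.comap (featVec X (S \ {i})) inferInstance ⊔
        MeasurableSpace.comap (fun ω => X ω i) inferInstance := by
    conv_lhs => rw [← hS]
    rw [comap_featVec_union, comap_featVec_singleton]
  have eqRc : MeasurableSpace.comap (featVec X (S \ {i})ᶜ) inferInstance =
      MeasurableSpace.comap (fun ω => X ω i) inferInstance ⊔
        MeasurableSpace.comap (featVec X Sᶜ) inferInstance := by
    rw [hRc, comap_featVec_union, comap_featVec_singleton, sup_comm]
  rw [DriftInducing] at h1 ⊢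
  rw [condIndepFun_iff _ _ _ _ hT (measurable_featVec hX _)] at h1 ⊢
  rw [condIndepFun_iff _ _ _ _ hT (hX.eval (a := i))] at h2
  intro t1 t2 ht1 ht2
  have hA : MeasurableSet t1 := hT.comap_le _ ht1
  rw [eqRc] at ht2
  refine condexp_contraction_aux ((measurable_featVec hX _).comap_le)
    ((hX.eval (a := i)).comap_le) ((measurable_featVec hX _).comap_le) hA
    ?_ ?_ ht2
  · intro C hC
    have := h1 t1 C ht1 hC
    rwa [eqS] at this
  · intro C hC
    exact h2 t1 C ht1 hC
end
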